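/- arXiv:1608.07647 — 9 statements merged into one kernel-verified Lean document; each statement's English description precedes it below -/
import Mathlib

section
/- Let y : 2^[n] → ℝ and define u[S] = Σ_{T ⊇ S} (-1)^{|T\S|} y[T]. Then the moment matrix M_n(y), defined by M_n(y)[S,T] = y[S ∪ T], satisfies M_n(y) = Z · Diag(u) · Zᵀ, where Z is the zeta matrix of the Boolean lattice on [n]. -/
open Finset

lemma sum_powerset_neg_one_pow_card_real {n : ℕ} (x : Finset (Fin n)) :
    (∑ m ∈ x.powerset, (-1 : ℝ) ^ m.card) = if x = ∅ then 1 else 0 := by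
  have := Finset.sum_powerset_neg_one_pow_card (x := x)
  have h : ((∑ m ∈ x.powerset, (-1 : ℤ) ^ m.card : ℤ) : ℝ)
      = ∑ m ∈ x.powerset, (-1 : ℝ) ^ m.card := by push_cast; ring_nf
  rw [← h, this]
  split <;> norm_num

lemma mm_inner_sum {n : ℕ} (A T : Finset (Fin n)) :
    ∑ R ∈ Finset.univ.filter (fun R => A ⊆ R ∧ R ⊆ T), (-1:ℝ)^(T\R).card
      = if T = A then 1 else 0 := by
  by_cases hAT : A ⊆ T
  · rw [Finset.sum_bij' (i := fun R _ => T \ R) (j := fun B _ => T \ B)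
      (t := (T \ A).powerset) (g := fun B => (-1:ℝ)^B.card)]
    · rw [sum_powerset_neg_one_pow_card_real]
      congr 1
      simp only [Finset.sdiff_eq_empty_iff_subset, eq_iff_iff]
      constructor
      · intro h; exact Finset.Subset.antisymm h hAT
      · intro h; exact h.le
    · intro R hR
      simp only [mem_filter, mem_univ, true_and] at hR
      simp only [mem_powerset]
      exact Finset.sdiff_subset_sdiff le_rfl hR.1
    · intro B hB
      simp only [mem_powerset] at hB
      simp only [mem_filter, mem_univ, true_and]
      constructor
      · intro a ha
        simp only [mem_sdiff]
        refine ⟨hAT ha, fun hBa => ?_⟩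
        exact (Finset.mem_sdiff.mp (hB hBa)).2 ha
      · exact Finset.sdiff_subset
    · intro R hR
      simp only [mem_filter, mem_univ, true_and] at hR
      exact Finset.sdiff_sdiff_eq_self hR.2
    · intro B hB
      simp only [mem_powerset] at hB
      exact Finset.sdiff_sdiff_eq_self (hB.trans Finset.sdiff_subset)
    · intro R hR; rfl
  · have h1 : Finset.univ.filter (fun R => A ⊆ R ∧ R ⊆ T) = ∅ := by
      ext R; simp only [mem_filter, mem_univ, true_and, Finset.notMem_empty, iff_false]
      rintro ⟨h1, h2⟩; exact hAT (h1.trans h2)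
    have h2 : T ≠ A := fun h => hAT h.ge
    simp [h1, h2]

lemma sum_u {n : ℕ} (y : Finset (Fin n) → ℝ) (A : Finset (Fin n)) :
    ∑ R ∈ Finset.univ.filter (fun R => A ⊆ R),
      ∑ T ∈ Finset.univ.filter (fun T => R ⊆ T), (-1:ℝ)^(T\R).card * y T = y A := by
  simp only [Finset.sum_filter]
  have hsw : ∀ R : Finset (Fin n),
      (if A ⊆ R then ∑ T : Finset (Fin n), (if R ⊆ T then (-1:ℝ)^(T\R).card * y T else 0) else 0)
        = ∑ T : Finset (Fin n), if A ⊆ R then (if R ⊆ T then (-1:ℝ)^(T\R).card * y T else 0) else 0 := by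
    intro R; split <;> simp
  simp only [hsw]
  rw [Finset.sum_comm]
  have : ∀ T : Finset (Fin n),
      (∑ R : Finset (Fin n), if A ⊆ R then (if R ⊆ T then (-1:ℝ)^(T\R).card * y T else 0) else 0)
        = (if T = A then 1 else 0) * y T := by
    intro T
    rw [← mm_inner_sum A T, Finset.sum_filter, Finset.sum_mul]
    apply Finset.sum_congr rfl
    intro R _
    by_cases h1 : A ⊆ R <;> by_cases h2 : R ⊆ T <;> simp [h1, h2]
  simp only [this]
  simp

/-- The moment matrix factorizes as `Z · Diag(u) · Zᵀ` where `u` is the Möbius transform of `y`. -/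
theorem moment_matrix_factorization (n : ℕ) (hn : 0 < n)
    (y u : Finset (Fin n) → ℝ)
    (hu : ∀ S : Finset (Fin n),
      u S = ∑ T ∈ Finset.univ.filter (fun T : Finset (Fin n) => S ⊆ T),
        (-1 : ℝ) ^ (T \ S).card * y T)
    (Z Mn : Matrix (Finset (Fin n)) (Finset (Fin n)) ℝ)
    (hZ : ∀ S T : Finset (Fin n), Z S T = if S ⊆ T then 1 else 0)
    (hMn : ∀ S T : Finset (Fin n), Mn S T = y (S ∪ T)) :
    Mn = Z * Matrix.diagonal u * Z.transpose := by
  ext S T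
  rw [hMn, Matrix.mul_apply]
  simp only [Matrix.mul_diagonal, Matrix.transpose_apply, hZ]
  have key : ∀ R : Finset (Fin n),
      (if S ⊆ R then (1:ℝ) else 0) * u R * (if T ⊆ R then (1:ℝ) else 0)
        = if S ∪ T ⊆ R then u R else 0 := by
    intro R
    by_cases h1 : S ⊆ R <;> by_cases h2 : T ⊆ R <;>
      simp [h1, h2, Finset.union_subset_iff]
  simp only [key]
  rw [← Finset.sum_filter]
  simp only [hu]
  exact (sum_u y (S ∪ T)).symm
end

section
/- Let θ ∈ (0,1) and define y : 2^[n] → ℝ by y[S] = θ^{|S|}. Then the moment matrix M_n(y), with entries M_n(y)[S,T] = θ^{|S∪T|}, is positive semidefinite. -/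
/-!
Put `c = θ⁻¹ - 1 ≥ 0`. Since `|S ∪ T| = |S| + |T| - |S ∩ T|` and `θ⁻¹ = 1 + c`,
`θ ^ |S ∪ T| = θ ^ |S| θ ^ |T| (1 + c) ^ |S ∩ T| = ∑_{U ⊆ S ∩ T} c ^ |U| θ ^ |S| θ ^ |T|`.
So the matrix is a nonnegative combination, over all `U`, of the rank-one matrices `v_U v_Uᵀ`
with `v_U S = θ ^ |S|` for `U ⊆ S` and `0` otherwise.
-/

open Finset Matrix

theorem Finset.sum_powerset_pow_card {R ι : Type*} [CommSemiring R] (a : R) (s : Finset ι) :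
    ∑ t ∈ s.powerset, a ^ #t = (a + 1) ^ #s := by
  simpa using sum_pow_mul_eq_add_pow a 1 s

section MomentMatrix

variable {α : Type*} [DecidableEq α]

theorem pow_card_union_eq_sum_powerset_inter {K : Type*} [Field K] {θ : K} (hθ : θ ≠ 0)
    (s t : Finset α) :
    θ ^ #(s ∪ t) = ∑ u ∈ (s ∩ t).powerset, (θ⁻¹ - 1) ^ #u * (θ ^ #s * θ ^ #t) := by
  have hcard : θ ^ #(s ∪ t) * θ ^ #(s ∩ t) = θ ^ #s * θ ^ #t := by
    rw [← pow_add, ← pow_add, card_union_add_card_inter]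
  rw [← sum_mul, sum_powerset_pow_card, sub_add_cancel, inv_pow, ← hcard, mul_comm,
    mul_inv_cancel_right₀ (pow_ne_zero _ hθ)]

def supersetPowVec {K : Type*} [Semiring K] (θ : K) (u : Finset α) : Finset α → K :=
  fun s => if u ⊆ s then θ ^ #s else 0

theorem of_pow_card_union_eq_sum_vecMulVec [Fintype α] {K : Type*} [Field K] {θ : K}
    (hθ : θ ≠ 0) :
    Matrix.of (fun s t : Finset α => θ ^ #(s ∪ t)) =
      ∑ u : Finset α, (θ⁻¹ - 1) ^ #u • vecMulVec (supersetPowVec θ u) (supersetPowVec θ u) := by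
  ext s t
  rw [of_apply, pow_card_union_eq_sum_powerset_inter hθ, Matrix.sum_apply]
  simp only [Matrix.smul_apply, vecMulVec_apply, supersetPowVec, smul_eq_mul, mul_ite, ite_mul,
    mul_zero, zero_mul]
  rw [← sum_filter, ← sum_filter, filter_filter]
  simp_rw [← subset_inter_iff, inter_comm t s, filter_subset_univ]

theorem posSemidef_of_pow_card_union [Fintype α] {θ : ℝ} (hθ0 : 0 < θ) (hθ1 : θ ≤ 1) :
    (Matrix.of (fun s t : Finset α => θ ^ #(s ∪ t))).PosSemidef := by
  have hc : 0 ≤ θ⁻¹ - 1 := sub_nonneg.mpr (one_le_inv₀ hθ0 |>.mpr hθ1)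
  rw [of_pow_card_union_eq_sum_vecMulVec hθ0.ne']
  refine posSemidef_sum _ fun u _ => PosSemidef.smul ?_ (pow_nonneg hc _)
  simpa using posSemidef_vecMulVec_self_star (supersetPowVec θ u)

end MomentMatrix

theorem moment_matrix_theta_posSemidef_general (n : ℕ) (θ : ℝ) (hθ0 : 0 < θ) (hθ1 : θ < 1) :
    (Matrix.of (fun S T : Finset (Fin n) => θ ^ (S ∪ T).card)).PosSemidef :=
  posSemidef_of_pow_card_union hθ0 hθ1.le

/-- For `θ ∈ (0,1)`, the moment matrix with entries `θ^{|S ∪ T|}` is positive semidefinite. -/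
theorem moment_matrix_theta_posSemidef (n : ℕ) (hn : 0 < n) (θ : ℝ) (hθ0 : 0 < θ) (hθ1 : θ < 1) :
    (Matrix.of (fun S T : Finset (Fin n) => θ ^ (S ∪ T).card)).PosSemidef :=
  moment_matrix_theta_posSemidef_general n θ hθ0 hθ1
end

section
/- Let n ≥ 2, ρ ∈ (0,1), θ ∈ (0,1), and define u[S] = (n-|S|-ρ) θ^{|S|}(1-θ)^{n-|S|} for proper subsets S ⊂ [n]. If ρ·θ^n · Σ_{S ⊊ [n]} 1/u[S] < 1, then the (2^n - 1)-dimensional matrix M indexed by proper subsets of [n] with M[S,T] = ((n-|S∪T|)(1-θ)-ρ) θ^{|S∪T|} is positive definite. -/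
/-!
Extend `u` to `[n]` by the same formula, so that `u [n] = -ρ θ^n`. A binomial computation gives
`Σ_{R ⊇ U} u R = ((n - |U|)(1 - θ) - ρ) θ^|U|`, hence `M = Zᵀ diag(u) Z - ρ θ^n J`, where `Z` is
the zeta matrix of the subset order on proper subsets and `J` is the all-ones matrix. For
`a = Z x`, Möbius inversion gives `Σ_S x_S = Σ_R v_R a_R` with `v_R = -(-1)^|Rᶜ|`, so
`xᵀ M x = Σ_R u_R a_R² - ρ θ^n (Σ_R v_R a_R)²`, and Cauchy–Schwarz bounds the second term by
`ρ θ^n (Σ_R 1/u_R) Σ_R u_R a_R² < Σ_R u_R a_R²`; finally `a ≠ 0` because `Z` is unitriangular.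
-/

open Finset Matrix

theorem Finset.sum_powerset_card_mul_pow_mul_one_sub_pow {ι R : Type*} [CommRing R]
    (s : Finset ι) (p : R) :
    ∑ t ∈ s.powerset, (#t : R) * (p ^ #t * (1 - p) ^ (#s - #t)) = #s * p := by
  rw [sum_powerset_apply_card (fun k => (k : R) * (p ^ k * (1 - p) ^ (#s - k)))]
  simpa [bernsteinPolynomial, Polynomial.eval_finsetSum, nsmul_eq_mul, mul_assoc, mul_left_comm]
    using congrArg (Polynomial.eval p) (bernsteinPolynomial.sum_smul (R := R) #s)

section Superset

variable {α : Type*} [Fintype α] [DecidableEq α]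

theorem Finset.sum_superset_eq_sum_powerset_compl {M : Type*} [AddCommMonoid M]
    (U : Finset α) (f : Finset α → M) :
    ∑ R with U ⊆ R, f R = ∑ B ∈ Uᶜ.powerset, f Bᶜ := by
  refine sum_nbij' compl compl (fun R hR => ?_) (fun B hB => ?_) (fun R _ => compl_compl R)
    (fun B _ => compl_compl B) (fun R _ => by rw [compl_compl])
  · simpa [compl_subset_compl] using hR
  · simpa [subset_compl_comm] using hB

theorem Finset.sum_superset_neg_one_pow_card_compl {R : Type*} [Ring R] (U : Finset α) :
    ∑ S with U ⊆ S, (-1 : R) ^ #Sᶜ = if U = univ then 1 else 0 := by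
  rw [sum_superset_eq_sum_powerset_compl]
  simp only [compl_compl]
  have := congrArg (Int.cast : ℤ → R) (sum_powerset_neg_one_pow_card (x := Uᶜ))
  push_cast [compl_eq_empty_iff] at this
  exact this

theorem Finset.sum_superset_card_compl_sub_mul_pow_mul_one_sub_pow {R : Type*} [CommRing R]
    (U : Finset α) (ρ θ : R) :
    ∑ S with U ⊆ S, ((#Sᶜ : R) - ρ) * θ ^ #S * (1 - θ) ^ #Sᶜ
      = ((#Uᶜ : R) * (1 - θ) - ρ) * θ ^ #U := by
  rw [sum_superset_eq_sum_powerset_compl]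
  have hterm : ∀ B ∈ Uᶜ.powerset, ((#Bᶜᶜ : R) - ρ) * θ ^ #Bᶜ * (1 - θ) ^ #Bᶜᶜ
      = θ ^ #U * ((#B : R) * ((1 - θ) ^ #B * (1 - (1 - θ)) ^ (#Uᶜ - #B))
          - ρ * ((1 - θ) ^ #B * (1 - (1 - θ)) ^ (#Uᶜ - #B))) := by
    intro B hB
    have hBU : #Bᶜ = #U + (#Uᶜ - #B) := by
      have := card_le_card (mem_powerset.1 hB)
      have := card_compl_add_card B
      have := card_compl_add_card U
      omega
    rw [compl_compl, hBU, pow_add]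
    ring
  rw [sum_congr rfl hterm, ← mul_sum, sum_sub_distrib, ← mul_sum,
    sum_powerset_card_mul_pow_mul_one_sub_pow, sum_pow_mul_eq_add_pow]
  ring

end Superset

namespace Matrix

def zeta (α R : Type*) [LE α] [DecidableLE α] [Zero R] [One R] : Matrix α α R :=
  of fun i j => if j ≤ i then 1 else 0

variable {α R : Type*} [Fintype α] [PartialOrder α] [DecidableLE α]

theorem zeta_mulVec_apply [NonAssocSemiring R] (x : α → R) (i : α) :
    (zeta α R *ᵥ x) i = ∑ j with j ≤ i, x j := by
  simp [zeta, mulVec, dotProduct, sum_filter]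

theorem vecMul_zeta_apply [NonAssocSemiring R] (v : α → R) (j : α) :
    (v ᵥ* zeta α R) j = ∑ i with j ≤ i, v i := by
  simp [zeta, vecMul, dotProduct, sum_filter]

theorem transpose_zeta_mul_diagonal_mul_zeta_apply [NonAssocSemiring R] [DecidableEq α]
    (d : α → R) (i j : α) :
    ((zeta α R)ᵀ * diagonal d * zeta α R) i j = ∑ k with i ≤ k ∧ j ≤ k, d k := by
  rw [mul_apply, sum_filter]
  refine sum_congr rfl fun k _ => ?_
  simp only [zeta, mul_diagonal, transpose_apply, of_apply, mul_ite, mul_one, mul_zero, ite_and]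
  split_ifs <;> simp

/-- At a minimal point of the support of `x`, `zeta *ᵥ x` agrees with `x`. -/
theorem zeta_mulVec_injective [Ring R] : Function.Injective (zeta α R).mulVec := by
  suffices h : ∀ x : α → R, zeta α R *ᵥ x = 0 → x = 0 from fun x y hxy =>
    sub_eq_zero.1 (h _ (by rw [mulVec_sub, hxy, sub_self]))
  intro x hx
  by_contra hne
  obtain ⟨i, hi⟩ := exists_minimal_of_wellFoundedLT (fun i => x i ≠ 0) (Function.ne_iff.1 hne)
  have hxi : (zeta α R *ᵥ x) i = x i := by
    rw [zeta_mulVec_apply]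
    refine sum_eq_single_of_mem i (by simp) fun j hj hji => ?_
    by_contra hxj
    exact hji (le_antisymm (mem_filter.1 hj).2 (hi.2 hxj (mem_filter.1 hj).2))
  exact hi.1 (hxi ▸ congrFun hx i)

end Matrix

theorem Matrix.posDef_transpose_mul_diagonal_mul_sub_const {ι κ : Type*} [Fintype ι]
    [Fintype κ] [DecidableEq κ] (Z : Matrix κ ι ℝ) (hZ : Function.Injective Z.mulVec)
    {d : κ → ℝ} (hd : ∀ k, 0 < d k) {v : κ → ℝ} (hv : v ᵥ* Z = 1) {c : ℝ}
    (hc : c * ∑ k, v k ^ 2 / d k < 1) :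
    (Zᵀ * diagonal d * Z - of fun _ _ => c).PosDef := by
  refine posDef_iff_dotProduct_mulVec.2 ⟨?_, fun x hx => ?_⟩
  · rw [IsHermitian, conjTranspose_eq_transpose_of_trivial, transpose_sub, transpose_mul,
      transpose_mul, diagonal_transpose, transpose_transpose, Matrix.mul_assoc]
    rfl
  set a := Z *ᵥ x
  have hquad : star x ⬝ᵥ ((Zᵀ * diagonal d * Z - of fun _ _ => c) *ᵥ x)
      = ∑ k, d k * a k ^ 2 - c * (∑ k, v k * a k) ^ 2 := by
    have hsum : ∑ i, x i = ∑ k, v k * a k := by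
      simpa [dotProduct, hv] using (dotProduct_mulVec v Z x).symm
    have hdiag : a ⬝ᵥ (diagonal d *ᵥ a) = ∑ k, d k * a k ^ 2 :=
      sum_congr rfl fun k _ => by rw [mulVec_diagonal]; ring
    have hconst : x ⬝ᵥ ((of fun _ _ => c) *ᵥ x) = c * (∑ i, x i) ^ 2 := by
      simp only [dotProduct, mulVec, of_apply, sq, mul_sum, sum_mul]
      exact sum_congr rfl fun i _ => sum_congr rfl fun j _ => by ring
    rw [star_trivial, sub_mulVec, dotProduct_sub, ← mulVec_mulVec, ← mulVec_mulVec,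
      dotProduct_mulVec, vecMul_transpose, hdiag, hconst, hsum]
  have hcs : (∑ k, v k * a k) ^ 2 ≤ (∑ k, v k ^ 2 / d k) * ∑ k, d k * a k ^ 2 :=
    sum_sq_le_sum_mul_sum_of_sq_le_mul _ (fun k _ => div_nonneg (sq_nonneg _) (hd k).le)
      (fun k _ => mul_nonneg (hd k).le (sq_nonneg _))
      (fun k _ => le_of_eq (by field_simp [(hd k).ne']))
  have hpos : 0 < ∑ k, d k * a k ^ 2 := by
    obtain ⟨k, hk⟩ := Function.ne_iff.1 (hZ.ne hx : a ≠ Z *ᵥ 0)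
    rw [mulVec_zero, Pi.zero_apply] at hk
    exact sum_pos' (fun k _ => mul_nonneg (hd k).le (sq_nonneg _))
      ⟨k, mem_univ k, mul_pos (hd k) (by positivity)⟩
  rw [hquad]
  rcases le_total c 0 with hc0 | hc0
  · nlinarith [sq_nonneg (∑ k, v k * a k)]
  · nlinarith [mul_le_mul_of_nonneg_left hcs hc0]

theorem Fintype.sum_subtype_ne {β M : Type*} [Fintype β] [DecidableEq β] [AddCommGroup M]
    (b : β) (f : β → M) : ∑ x : {x // x ≠ b}, f x = ∑ x, f x - f b := by
  rw [← sum_subtype (univ.erase b) (by simp), sum_erase_eq_sub (mem_univ b)]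

section ProperSubsets

variable {α : Type*} [Fintype α] [DecidableEq α]

theorem Finset.sum_ne_univ_superset {M : Type*} [AddCommGroup M] (U : Finset α)
    (f : Finset α → M) :
    ∑ R : {R : Finset α // R ≠ univ} with U ⊆ R.1, f R = ∑ R with U ⊆ R, f R - f univ := by
  rw [sum_filter, sum_filter, Fintype.sum_subtype_ne univ (fun R => if U ⊆ R then f R else 0),
    if_pos (subset_univ U)]

theorem Matrix.vecMul_zeta_ne_univ {R : Type*} [Ring R] :
    (fun S : {S : Finset α // S ≠ univ} => -(-1 : R) ^ #S.1ᶜ) ᵥ* zeta _ R = 1 := by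
  ext S
  rw [vecMul_zeta_apply, Pi.one_apply,
    sum_congr (filter_congr fun (T : {S : Finset α // S ≠ univ}) _ =>
      show S ≤ T ↔ S.1 ⊆ T.1 from Iff.rfl) fun _ _ => rfl,
    sum_ne_univ_superset S.1 (fun T => -(-1 : R) ^ #Tᶜ), sum_neg_distrib,
    sum_superset_neg_one_pow_card_compl, if_neg S.2]
  simp

theorem Matrix.transpose_zeta_mul_diagonal_mul_zeta_ne_univ_apply {R : Type*} [Ring R]
    (f : Finset α → R) (S T : {S : Finset α // S ≠ univ}) :
    ((zeta _ R)ᵀ * diagonal (fun U : {S : Finset α // S ≠ univ} => f U) * zeta _ R :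
      Matrix _ _ R) S T
      = ∑ U with S.1 ∪ T.1 ⊆ U, f U - f univ := by
  rw [transpose_zeta_mul_diagonal_mul_zeta_apply, ← sum_ne_univ_superset]
  exact sum_congr (filter_congr fun _ _ => union_subset_iff.symm) fun _ _ => rfl

end ProperSubsets

theorem moment_matrix_proper_posDef_general (n : ℕ) (ρ θ : ℝ)
    (hρ1 : ρ < 1) (hθ0 : 0 < θ) (hθ1 : θ < 1)
    (u : Finset (Fin n) → ℝ)
    (hu : ∀ S : Finset (Fin n),
      u S = (n - S.card - ρ) * θ ^ S.card * (1 - θ) ^ (n - S.card))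
    (hsum : ρ * θ ^ n *
      ∑ S ∈ Finset.univ.filter (fun S : Finset (Fin n) => S ≠ Finset.univ), (u S)⁻¹ < 1)
    (M : Matrix {S : Finset (Fin n) // S ≠ Finset.univ}
                {S : Finset (Fin n) // S ≠ Finset.univ} ℝ)
    (hM : ∀ S T : {S : Finset (Fin n) // S ≠ Finset.univ},
      M S T = ((n - (S.1 ∪ T.1).card) * (1 - θ) - ρ) * θ ^ (S.1 ∪ T.1).card) :
    M.PosDef := by
  have hcompl (S : Finset (Fin n)) : (n : ℝ) - #S = #Sᶜ := by
    have : #S ≤ n := (card_le_univ S).trans_eq (Fintype.card_fin n)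
    rw [card_compl, Fintype.card_fin, Nat.cast_sub this]
  have hu_compl (S : Finset (Fin n)) : u S = (#Sᶜ - ρ) * θ ^ #S * (1 - θ) ^ #Sᶜ := by
    rw [hu, hcompl, card_compl, Fintype.card_fin]
  have hu_pos (S : {S : Finset (Fin n) // S ≠ univ}) : 0 < u S := by
    have : (1 : ℝ) ≤ #S.1ᶜ := by
      exact_mod_cast card_pos.2 (nonempty_iff_ne_empty.2 ((compl_eq_empty_iff _).not.2 S.2))
    rw [hu_compl]
    exact mul_pos (mul_pos (by linarith) (pow_pos hθ0 _)) (pow_pos (by linarith) _)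
  have hM_eq : M = (zeta _ ℝ)ᵀ * diagonal (fun R : {S : Finset (Fin n) // S ≠ univ} => u R) *
      zeta _ ℝ - of fun _ _ => ρ * θ ^ n := by
    ext S T
    rw [Matrix.sub_apply, transpose_zeta_mul_diagonal_mul_zeta_ne_univ_apply, of_apply, hM,
      hcompl, sum_congr rfl fun (R : Finset (Fin n)) _ => hu_compl R,
      sum_superset_card_compl_sub_mul_pow_mul_one_sub_pow, hu_compl]
    simp
  rw [hM_eq]
  refine posDef_transpose_mul_diagonal_mul_sub_const _ zeta_mulVec_injective hu_pos
    vecMul_zeta_ne_univ ?_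
  have hsub : ∑ S with S ≠ univ, (u S)⁻¹ = ∑ S : {S : Finset (Fin n) // S ≠ univ}, (u S)⁻¹ :=
    sum_subtype _ (fun _ => mem_filter_univ _) _
  simpa [hsub, neg_sq, ← pow_mul] using hsum

/-- If `ρ θ^n Σ_{S ⊊ [n]} 1/u[S] < 1` then the moment matrix restricted to proper subsets
is positive definite. -/
theorem moment_matrix_proper_posDef (n : ℕ) (hn : 2 ≤ n) (ρ θ : ℝ)
    (hρ0 : 0 < ρ) (hρ1 : ρ < 1) (hθ0 : 0 < θ) (hθ1 : θ < 1)
    (u : Finset (Fin n) → ℝ)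
    (hu : ∀ S : Finset (Fin n),
      u S = (n - S.card - ρ) * θ ^ S.card * (1 - θ) ^ (n - S.card))
    (hsum : ρ * θ ^ n *
      ∑ S ∈ Finset.univ.filter (fun S : Finset (Fin n) => S ≠ Finset.univ), (u S)⁻¹ < 1)
    (M : Matrix {S : Finset (Fin n) // S ≠ Finset.univ}
                {S : Finset (Fin n) // S ≠ Finset.univ} ℝ)
    (hM : ∀ S T : {S : Finset (Fin n) // S ≠ Finset.univ},
      M S T = ((n - (S.1 ∪ T.1).card) * (1 - θ) - ρ) * θ ^ (S.1 ∪ T.1).card) :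
    M.PosDef :=
  moment_matrix_proper_posDef_general n ρ θ hρ1 hθ0 hθ1 u hu hsum M hM
end

section
/- Let n ≥ 2, ρ ∈ (0,1), and define the vector y[S] = 1 - |S|ρ/(n-k+kρ) for S ⊆ [n], where k ∈ {1,...,n-1} is fixed. Then the Möbius transform u[S] = Σ_{T ⊇ S} (-1)^{|T\S|} y[T] satisfies u[S] = 0 if |S| ≤ n-2, u[S] = ρ/(n-k+kρ) if |S| = n-1, and u[[n]] = 1 - nρ/(n-k+kρ); consequently u ≥ 0 and the moment matrix M_n(y) is positive semidefinite. -/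
open Finset

/-!
Möbius inversion on the Boolean lattice, whose Möbius function is `μ(s, t) = (-1) ^ #(t \ s)`,
turns the computation of `u` into exhibiting a function whose zeta transform
`t ↦ ∑_{r ⊇ t} u r` is `y`. Since `y` is affine in `#S`, `y W = (1 - n c) + c · #Wᶜ` with
`c = ρ / (n - k + k ρ)`: this puts mass `1 - n c` on `[n]` and `c` on each set missing one
point. Both masses are nonnegative, so `M_n(y) = Z Diag(u) Zᵀ` is positive semidefinite.
-/

namespace Finset

variable {α : Type*} [DecidableEq α]

theorem sum_Icc_neg_one_pow_card_sdiff (𝕜 : Type*) [Ring 𝕜] (s t : Finset α) :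
    ∑ x ∈ Icc s t, (-1 : 𝕜) ^ #(x \ s) = if s = t then 1 else 0 := by
  by_cases hst : s ⊆ t
  · have hdisj {a : Finset α} (ha : a ∈ (t \ s).powerset) : Disjoint a s :=
      (disjoint_sdiff_self_left).mono_left (mem_powerset.1 ha)
    have hinj : Set.InjOn (s ∪ ·) (t \ s).powerset := fun a ha b hb hab => by
      simpa [union_sdiff_left, sdiff_eq_self_of_disjoint (hdisj ha),
        sdiff_eq_self_of_disjoint (hdisj hb)] using congr_arg (· \ s) hab
    rw [Icc_eq_image_powerset hst, sum_image hinj]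
    have halt := congr_arg (Int.cast : ℤ → 𝕜) (sum_powerset_neg_one_pow_card (x := t \ s))
    push_cast at halt
    rw [sum_congr rfl fun a ha => by rw [union_sdiff_left, sdiff_eq_self_of_disjoint (hdisj ha)],
      halt]
    exact if_congr (by rw [sdiff_eq_empty_iff_subset, hst.ge_iff_eq', eq_comm]) rfl rfl
  · rw [Icc_eq_empty hst, sum_empty, if_neg (by rintro rfl; exact hst subset_rfl)]

end Finset

namespace IncidenceAlgebra

variable (𝕜 : Type*) {α : Type*} [Ring 𝕜] [DecidableEq α]

theorem mu_finset_eq_ite (s t : Finset α) :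
    mu 𝕜 s t = if s ⊆ t then (-1) ^ #(t \ s) else 0 := by
  let f : IncidenceAlgebra 𝕜 (Finset α) :=
    ⟨fun s t => if s ⊆ t then (-1) ^ #(t \ s) else 0, fun _ _ h => if_neg h⟩
  have hf : f * zeta 𝕜 = 1 := by
    ext a b _
    rw [mul_apply, one_apply, ← Finset.sum_Icc_neg_one_pow_card_sdiff]
    refine sum_congr rfl fun x hx => ?_
    rw [mem_Icc] at hx
    simp [f, hx.1, hx.2]
  have hf_mu : f = mu 𝕜 := by
    calc f = f * (zeta 𝕜 * mu 𝕜) := by rw [zeta_mul_mu, mul_one]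
      _ = mu 𝕜 := by rw [← mul_assoc, hf, one_mul]
  rw [← hf_mu]; rfl

end IncidenceAlgebra

namespace Finset

variable {α 𝕜 : Type*} [Fintype α] [DecidableEq α]

theorem moebius_inversion_superset [Ring 𝕜] (f g : Finset α → 𝕜)
    (h : ∀ s, g s = ∑ t with s ⊆ t, f t) (s : Finset α) :
    f s = ∑ t with s ⊆ t, (-1) ^ #(t \ s) * g t := by
  rw [IncidenceAlgebra.moebius_inversion_top f g (fun s => by rw [h, filter_le_eq_Ici]) s,
    ← filter_le_eq_Ici]
  refine sum_congr rfl fun t ht => ?_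
  rw [IncidenceAlgebra.mu_finset_eq_ite, if_pos (mem_filter.1 ht).2]

theorem card_filter_superset_card_compl_eq (s : Finset α) (j : ℕ) :
    #{t | s ⊆ t ∧ #tᶜ = j} = (#sᶜ).choose j := by
  have : ({t | s ⊆ t ∧ #tᶜ = j} : Finset (Finset α)) =
      (powersetCard j sᶜ).map ⟨compl, compl_injective⟩ := by
    ext t
    simp only [mem_filter, mem_univ, true_and, mem_map, mem_powersetCard,
      Function.Embedding.coeFn_mk]
    constructor
    · rintro ⟨hst, rfl⟩
      exact ⟨tᶜ, ⟨compl_subset_compl.2 hst, rfl⟩, compl_compl t⟩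
    · rintro ⟨a, ⟨hsa, rfl⟩, rfl⟩
      exact ⟨by simpa using compl_subset_compl.2 hsa, by rw [compl_compl]⟩
  rw [this, card_map, card_powersetCard]

theorem sum_superset_ite_card_compl_eq [AddCommMonoid 𝕜] (s : Finset α) (j : ℕ)
    (a : 𝕜) :
    ∑ t with s ⊆ t, (if #tᶜ = j then a else 0) = (#sᶜ).choose j • a := by
  rw [← sum_filter, filter_filter, sum_const, card_filter_superset_card_compl_eq]

theorem one_sub_card_mul_eq_sum_superset [CommRing 𝕜] (c : 𝕜) (s : Finset α) :
    1 - #s * c = ∑ t with s ⊆ t,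
      ((if #tᶜ = 0 then 1 - Fintype.card α * c else 0) + (if #tᶜ = 1 then c else 0)) := by
  rw [sum_add_distrib, sum_superset_ite_card_compl_eq, sum_superset_ite_card_compl_eq,
    ← card_add_card_compl s, Nat.cast_add]
  simp only [Nat.choose_zero_right, Nat.choose_one_right, one_smul, nsmul_eq_mul]
  ring

theorem moebius_one_sub_card_mul [CommRing 𝕜] (c : 𝕜) (s : Finset α) :
    ∑ t with s ⊆ t, (-1) ^ #(t \ s) * (1 - #t * c) =
      (if #sᶜ = 0 then 1 - Fintype.card α * c else 0) + (if #sᶜ = 1 then c else 0) :=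
  (moebius_inversion_superset _ _ (one_sub_card_mul_eq_sum_superset c) s).symm

def zetaMatrix (α 𝕜 : Type*) [DecidableEq α] [Zero 𝕜] [One 𝕜] :
    Matrix (Finset α) (Finset α) 𝕜 :=
  Matrix.of fun s t => if s ⊆ t then 1 else 0

theorem union_moment_matrix_eq_zetaMatrix_mul_diagonal_mul_transpose [CommSemiring 𝕜]
    {y u : Finset α → 𝕜} (hy : ∀ s, y s = ∑ t with s ⊆ t, u t) :
    Matrix.of (fun s t => y (s ∪ t)) =
      zetaMatrix α 𝕜 * Matrix.diagonal u * (zetaMatrix α 𝕜).transpose := by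
  ext s t
  rw [Matrix.mul_apply, Matrix.of_apply, hy, sum_filter]
  refine sum_congr rfl fun r _ => ?_
  simp only [Matrix.mul_diagonal, Matrix.transpose_apply, zetaMatrix, Matrix.of_apply,
    union_subset_iff, ite_and, ite_mul, one_mul, zero_mul, mul_ite, mul_one, mul_zero]
  split_ifs <;> rfl

theorem posSemidef_union_moment_matrix {y u : Finset α → ℝ} (hu : ∀ s, 0 ≤ u s)
    (hy : ∀ s, y s = ∑ t with s ⊆ t, u t) :
    (Matrix.of fun s t => y (s ∪ t)).PosSemidef := by
  rw [union_moment_matrix_eq_zetaMatrix_mul_diagonal_mul_transpose hy,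
    ← Matrix.conjTranspose_eq_transpose_of_trivial]
  exact (Matrix.PosSemidef.diagonal fun s => hu s).mul_mul_conjTranspose_same _

end Finset

theorem mobius_transform_gap_general (n k : ℕ) (hn : 2 ≤ n) (hkn : k ≤ n - 1)
    (ρ : ℝ) (hρ0 : 0 < ρ) (hρ1 : ρ < 1)
    (y u : Finset (Fin n) → ℝ)
    (hy : ∀ S : Finset (Fin n), y S = 1 - S.card * ρ / (n - k + k * ρ))
    (hu : ∀ S : Finset (Fin n),
      u S = ∑ T ∈ Finset.univ.filter (fun T : Finset (Fin n) => S ⊆ T),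
        (-1 : ℝ) ^ (T \ S).card * y T) :
    (∀ S : Finset (Fin n), S.card ≤ n - 2 → u S = 0) ∧
    (∀ S : Finset (Fin n), S.card = n - 1 → u S = ρ / (n - k + k * ρ)) ∧
    u Finset.univ = 1 - n * ρ / (n - k + k * ρ) ∧
    (∀ S : Finset (Fin n), 0 ≤ u S) ∧
    (Matrix.of (fun S T : Finset (Fin n) => y (S ∪ T))).PosSemidef := by
  set d : ℝ := n - k + k * ρ
  have hk : (k : ℝ) + 1 ≤ n := by exact_mod_cast (by omega : k + 1 ≤ n)
  have hd : 0 < d := by nlinarith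
  have hc : 0 < ρ / d := div_pos hρ0 hd
  have hnc : n * (ρ / d) ≤ 1 := by
    rw [← mul_div_assoc, div_le_one hd]
    nlinarith
  have hy' (S : Finset (Fin n)) : y S = 1 - #S * (ρ / d) := by rw [hy, mul_div_assoc]
  have hu' (S : Finset (Fin n)) :
      u S = (if #Sᶜ = 0 then 1 - n * (ρ / d) else 0) + (if #Sᶜ = 1 then ρ / d else 0) := by
    simp_rw [hu, hy', moebius_one_sub_card_mul, Fintype.card_fin]
  have hcompl (S : Finset (Fin n)) : #Sᶜ = n - #S := by simp [card_compl]
  have hu_nonneg (S : Finset (Fin n)) : 0 ≤ u S := by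
    rw [hu']
    exact add_nonneg (by split_ifs <;> linarith) (by split_ifs <;> linarith)
  have hy_sum (S : Finset (Fin n)) : y S = ∑ T with S ⊆ T, u T := by
    rw [hy', one_sub_card_mul_eq_sum_superset, Fintype.card_fin]
    simp_rw [hu']
  refine ⟨fun S hS => ?_, fun S hS => ?_, ?_, hu_nonneg,
    posSemidef_union_moment_matrix hu_nonneg hy_sum⟩
  · rw [hu', hcompl, if_neg (by omega), if_neg (by omega), add_zero]
  · rw [hu', hcompl, if_neg (by omega), if_pos (by omega), zero_add]
  · rw [hu', compl_univ, card_empty, if_pos rfl, if_neg zero_ne_one, add_zero, mul_div_assoc]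

/-- The Möbius transform of `y[S] = 1 - |S|ρ/(n-k+kρ)` vanishes on sets of size `≤ n-2`,
equals `ρ/(n-k+kρ)` on sets of size `n-1`, and `1 - nρ/(n-k+kρ)` on `[n]`; consequently the
moment matrix `M_n(y)` is positive semidefinite. -/
theorem mobius_transform_gap (n k : ℕ) (hn : 2 ≤ n) (hk1 : 1 ≤ k) (hkn : k ≤ n - 1)
    (ρ : ℝ) (hρ0 : 0 < ρ) (hρ1 : ρ < 1)
    (y u : Finset (Fin n) → ℝ)
    (hy : ∀ S : Finset (Fin n), y S = 1 - S.card * ρ / (n - k + k * ρ))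
    (hu : ∀ S : Finset (Fin n),
      u S = ∑ T ∈ Finset.univ.filter (fun T : Finset (Fin n) => S ⊆ T),
        (-1 : ℝ) ^ (T \ S).card * y T) :
    (∀ S : Finset (Fin n), S.card ≤ n - 2 → u S = 0) ∧
    (∀ S : Finset (Fin n), S.card = n - 1 → u S = ρ / (n - k + k * ρ)) ∧
    u Finset.univ = 1 - n * ρ / (n - k + k * ρ) ∧
    (∀ S : Finset (Fin n), 0 ≤ u S) ∧
    (Matrix.of (fun S T : Finset (Fin n) => y (S ∪ T))).PosSemidef :=
  mobius_transform_gap_general n k hn hkn ρ hρ0 hρ1 y u hy hu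
end

section
/- The integer hull of the chipped hypercube P_{n,ρ} = {x ∈ [0,1]^n : Σᵢ xᵢ ≤ n-ρ} for ρ ∈ (0,1) equals {x ∈ [0,1]^n : Σᵢ xᵢ ≤ n-1}. -/
open Finset

private lemma int_sum_aux (n : ℕ) (x : Fin n → ℝ) (s : Finset (Fin n))
    (h : ∀ j ∈ s, x j = 0 ∨ x j = 1) : ∃ m : ℤ, ∑ j ∈ s, x j = m := by
  classical
  induction s using Finset.induction_on with
  | empty => exact ⟨0, by simp⟩
  | @insert a s' hnot ih =>
    obtain ⟨m, hm⟩ := ih (fun j hj => h j (Finset.mem_insert_of_mem hj))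
    rcases h a (Finset.mem_insert_self a s') with h0 | h1
    · exact ⟨m, by rw [Finset.sum_insert hnot, h0, hm]; simp⟩
    · exact ⟨m + 1, by rw [Finset.sum_insert hnot, h1, hm]; push_cast; ring⟩

private lemma hull_mem (n : ℕ) (ρ : ℝ) (hρ1 : ρ < 1) :
    ∀ N (x : Fin n → ℝ),
      (Finset.univ.filter (fun i => x i ≠ 0 ∧ x i ≠ 1)).card ≤ N →
      (∀ i, 0 ≤ x i ∧ x i ≤ 1) → ∑ i, x i ≤ n - 1 →
      x ∈ convexHull ℝ {x : Fin n → ℝ |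
        ((∀ i, 0 ≤ x i ∧ x i ≤ 1) ∧ ∑ i, x i ≤ n - ρ) ∧ ∀ i, x i = 0 ∨ x i = 1} := by
  classical
  intro N
  induction N with
  | zero =>
    intro x hcard hbd hsum
    have hint : ∀ i, x i = 0 ∨ x i = 1 := by
      intro i
      by_contra hcon
      push_neg at hcon
      have : i ∈ Finset.univ.filter (fun i => x i ≠ 0 ∧ x i ≠ 1) := by
        simp [hcon.1, hcon.2]
      have := Finset.card_pos.mpr ⟨i, this⟩
      omega
    exact subset_convexHull ℝ _ ⟨⟨hbd, by linarith⟩, hint⟩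
  | succ N ih =>
    intro x hcard hbd hsum
    set F := Finset.univ.filter (fun i => x i ≠ 0 ∧ x i ≠ 1) with hF
    by_cases h0 : F.card = 0
    · -- all coordinates integral
      have hint : ∀ i, x i = 0 ∨ x i = 1 := by
        intro i
        by_contra hcon
        push_neg at hcon
        have : i ∈ F := by simp [hF, hcon.1, hcon.2]
        have := Finset.card_pos.mpr ⟨i, this⟩
        omega
      exact subset_convexHull ℝ _ ⟨⟨hbd, by linarith⟩, hint⟩
    · obtain ⟨i, hi⟩ : ∃ i, i ∈ F := Finset.card_pos.mp (by omega) |>.imp (fun _ h => h) |>.elim (fun a h => ⟨a, h⟩)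
      have hxi : x i ≠ 0 ∧ x i ≠ 1 := (Finset.mem_filter.mp hi).2
      have hxi0 : 0 < x i := lt_of_le_of_ne (hbd i).1 (Ne.symm hxi.1)
      have hxi1 : x i < 1 := lt_of_le_of_ne (hbd i).2 hxi.2
      by_cases h1 : F.card = 1
      · -- exactly one fractional coordinate: split it to 0 and 1
        have hFsing : F = {i} :=
          Finset.eq_singleton_iff_unique_mem.mpr
            ⟨hi, fun b hb => (Finset.card_le_one.mp h1.le) b hb i hi⟩
        have hother : ∀ k, k ≠ i → x k = 0 ∨ x k = 1 := by
          intro k hk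
          by_contra hcon
          push_neg at hcon
          have : k ∈ F := by simp [hF, hcon.1, hcon.2]
          rw [hFsing] at this
          exact hk (Finset.mem_singleton.mp this)
        set a : Fin n → ℝ := Function.update x i 0 with haa
        set b : Fin n → ℝ := Function.update x i 1 with hbb
        have hsum_erase : ∑ j ∈ Finset.univ.erase i, x j = ∑ j, x j - x i := by
          have := Finset.sum_erase_add Finset.univ x (Finset.mem_univ i)
          linarith
        obtain ⟨m, hm⟩ := int_sum_aux n x (Finset.univ.erase i)
          (fun j hj => hother j (Finset.ne_of_mem_erase hj))
        have hmlt : (m : ℝ) < (n : ℝ) - 1 := by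
          rw [← hm, hsum_erase]; linarith
        have hmle : (m : ℝ) + 1 ≤ (n : ℝ) - 1 := by
          have : m < (n : ℤ) - 1 := by exact_mod_cast hmlt
          have : m + 1 ≤ (n : ℤ) - 1 := by omega
          exact_mod_cast this
        have hsuma : ∑ j, a j = ∑ j, x j - x i := by
          rw [haa, Finset.sum_update_of_mem (Finset.mem_univ i), ← Finset.erase_eq, hsum_erase]; ring
        have hsumb : ∑ j, b j = (m : ℝ) + 1 := by
          rw [hbb, Finset.sum_update_of_mem (Finset.mem_univ i), ← Finset.erase_eq, ← hm]; ring
        have ha : a ∈ {x : Fin n → ℝ |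
            ((∀ i, 0 ≤ x i ∧ x i ≤ 1) ∧ ∑ i, x i ≤ n - ρ) ∧ ∀ i, x i = 0 ∨ x i = 1} := by
          refine ⟨⟨fun k => ?_, by rw [hsuma]; linarith⟩, fun k => ?_⟩
          · rcases eq_or_ne k i with rfl | hk
            · simp [haa]
            · simp only [haa, Function.update_of_ne hk]; exact hbd k
          · rcases eq_or_ne k i with rfl | hk
            · simp [haa]
            · simp only [haa, Function.update_of_ne hk]; exact hother k hk
        have hb : b ∈ {x : Fin n → ℝ |
            ((∀ i, 0 ≤ x i ∧ x i ≤ 1) ∧ ∑ i, x i ≤ n - ρ) ∧ ∀ i, x i = 0 ∨ x i = 1} := by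
          refine ⟨⟨fun k => ?_, by rw [hsumb]; linarith⟩, fun k => ?_⟩
          · rcases eq_or_ne k i with rfl | hk
            · simp [hbb]
            · simp only [hbb, Function.update_of_ne hk]; exact hbd k
          · rcases eq_or_ne k i with rfl | hk
            · simp [hbb]
            · simp only [hbb, Function.update_of_ne hk]; exact hother k hk
        have hx : x = (1 - x i) • a + (x i) • b := by
          funext k
          rcases eq_or_ne k i with rfl | hk
          · simp [haa, hbb]
          · simp [haa, hbb, Function.update_of_ne hk]; ring
        rw [hx]
        exact (convex_convexHull ℝ _) (subset_convexHull ℝ _ ha) (subset_convexHull ℝ _ hb)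
          (by linarith) (le_of_lt hxi0) (by ring)
      · -- at least two fractional coordinates
        have h2 : 2 ≤ F.card := by omega
        obtain ⟨j, hj⟩ := Finset.card_pos.mp (show 0 < (F.erase i).card by
          have := Finset.card_erase_of_mem hi; omega)
        have hji : j ≠ i := Finset.ne_of_mem_erase hj
        have hxj : x j ≠ 0 ∧ x j ≠ 1 := (Finset.mem_filter.mp (Finset.mem_of_mem_erase hj)).2
        have hxj0 : 0 < x j := lt_of_le_of_ne (hbd j).1 (Ne.symm hxj.1)
        have hxj1 : x j < 1 := lt_of_le_of_ne (hbd j).2 hxj.2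
        set t : ℝ := min (x i) (1 - x j) with ht
        set s : ℝ := min (1 - x i) (x j) with hs
        have ht0 : 0 < t := lt_min hxi0 (by linarith)
        have hs0 : 0 < s := lt_min (by linarith) hxj0
        have hti : t ≤ x i := min_le_left _ _
        have htj : t ≤ 1 - x j := min_le_right _ _
        have hsi : s ≤ 1 - x i := min_le_left _ _
        have hsj : s ≤ x j := min_le_right _ _
        set y : Fin n → ℝ := fun k => if k = i then x i - t else if k = j then x j + t else x k with hy
        set z : Fin n → ℝ := fun k => if k = i then x i + s else if k = j then x j - s else x k with hz
        have hyi : y i = x i - t := by simp [hy]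
        have hyj : y j = x j + t := by simp [hy, hji]
        have hzi : z i = x i + s := by simp [hz]
        have hzj : z j = x j - s := by simp [hz, hji]
        have hyk : ∀ k, k ≠ i → k ≠ j → y k = x k := by intro k h1 h2; simp [hy, h1, h2]
        have hzk : ∀ k, k ≠ i → k ≠ j → z k = x k := by intro k h1 h2; simp [hz, h1, h2]
        -- sums are preserved
        have hsum_gen : ∀ (w : Fin n → ℝ), w i - x i + (w j - x j) = 0 →
            (∀ k, k ≠ i → k ≠ j → w k = x k) → ∑ k, w k = ∑ k, x k := by
          intro w hwij hwk
          have hzero : ∑ k, (w k - x k) = 0 := by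
            have hsub : ∑ k ∈ ({i, j} : Finset (Fin n)), (w k - x k)
                = ∑ k, (w k - x k) := by
              apply Finset.sum_subset (Finset.subset_univ _)
              intro k _ hk
              simp only [Finset.mem_insert, Finset.mem_singleton, not_or] at hk
              rw [hwk k hk.1 hk.2]; ring
            rw [← hsub, Finset.sum_pair (Ne.symm hji)]
            linarith
          have := Finset.sum_sub_distrib (s := (Finset.univ : Finset (Fin n))) (f := w) (g := x)
          rw [this] at hzero
          linarith
        have hsumy : ∑ k, y k = ∑ k, x k := hsum_gen y (by rw [hyi, hyj]; ring) hyk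
        have hsumz : ∑ k, z k = ∑ k, x k := hsum_gen z (by rw [hzi, hzj]; ring) hzk
        -- bounds
        have hbdy : ∀ k, 0 ≤ y k ∧ y k ≤ 1 := by
          intro k
          rcases eq_or_ne k i with rfl | hki
          · rw [hyi]; constructor <;> linarith [(hbd k).2]
          rcases eq_or_ne k j with rfl | hkj
          · rw [hyj]; constructor <;> linarith [(hbd k).1]
          · rw [hyk k hki hkj]; exact hbd k
        have hbdz : ∀ k, 0 ≤ z k ∧ z k ≤ 1 := by
          intro k
          rcases eq_or_ne k i with rfl | hki
          · rw [hzi]; constructor <;> linarith [(hbd k).1]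
          rcases eq_or_ne k j with rfl | hkj
          · rw [hzj]; constructor <;> linarith [(hbd k).2]
          · rw [hzk k hki hkj]; exact hbd k
        -- fractional counts decrease
        have hsubset : ∀ (w : Fin n → ℝ), (∀ k, k ≠ i → k ≠ j → w k = x k) →
            (Finset.univ.filter (fun k => w k ≠ 0 ∧ w k ≠ 1)) ⊆ F := by
          intro w hwk k hk
          simp only [Finset.mem_filter, Finset.mem_univ, true_and] at hk
          rcases eq_or_ne k i with rfl | hki
          · exact hi
          rcases eq_or_ne k j with rfl | hkj
          · exact Finset.mem_of_mem_erase hj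
          · rw [hF]; simp only [Finset.mem_filter, Finset.mem_univ, true_and]
            rwa [← hwk k hki hkj]
        have hcardy : (Finset.univ.filter (fun k => y k ≠ 0 ∧ y k ≠ 1)).card ≤ N := by
          have hss : (Finset.univ.filter (fun k => y k ≠ 0 ∧ y k ≠ 1)) ⊂ F := by
            rw [Finset.ssubset_iff_of_subset (hsubset y hyk)]
            rcases min_cases (x i) (1 - x j) with ⟨hmin, _⟩ | ⟨hmin, _⟩
            · refine ⟨i, hi, fun hmem => ?_⟩
              exact (Finset.mem_filter.mp hmem).2.1 (by rw [hyi, ht, hmin]; ring)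
            · refine ⟨j, Finset.mem_of_mem_erase hj, fun hmem => ?_⟩
              exact (Finset.mem_filter.mp hmem).2.2 (by rw [hyj, ht, hmin]; ring)
          have := Finset.card_lt_card hss
          omega
        have hcardz : (Finset.univ.filter (fun k => z k ≠ 0 ∧ z k ≠ 1)).card ≤ N := by
          have hss : (Finset.univ.filter (fun k => z k ≠ 0 ∧ z k ≠ 1)) ⊂ F := by
            rw [Finset.ssubset_iff_of_subset (hsubset z hzk)]
            rcases min_cases (1 - x i) (x j) with ⟨hmin, _⟩ | ⟨hmin, _⟩
            · refine ⟨i, hi, fun hmem => ?_⟩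
              exact (Finset.mem_filter.mp hmem).2.2 (by rw [hzi, hs, hmin]; ring)
            · refine ⟨j, Finset.mem_of_mem_erase hj, fun hmem => ?_⟩
              exact (Finset.mem_filter.mp hmem).2.1 (by rw [hzj, hs, hmin]; ring)
          have := Finset.card_lt_card hss
          omega
        have hymem := ih y hcardy hbdy (by rw [hsumy]; exact hsum)
        have hzmem := ih z hcardz hbdz (by rw [hsumz]; exact hsum)
        -- x is a convex combination of y and z
        have hst : 0 < s + t := by linarith
        have hx : x = (s / (s + t)) • y + (t / (s + t)) • z := by
          funext k
          simp only [Pi.add_apply, Pi.smul_apply, smul_eq_mul]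
          rcases eq_or_ne k i with rfl | hki
          · rw [hyi, hzi]; field_simp; ring
          rcases eq_or_ne k j with rfl | hkj
          · rw [hyj, hzj]; field_simp; ring
          · rw [hyk k hki hkj, hzk k hki hkj]; field_simp
        rw [hx]
        exact (convex_convexHull ℝ _) hymem hzmem
          (div_nonneg hs0.le hst.le) (div_nonneg ht0.le hst.le)
          (by field_simp)

/-- The integer hull of the chipped hypercube `P_{n,ρ}` for `ρ ∈ (0,1)` is
`{x ∈ [0,1]^n : Σᵢ xᵢ ≤ n-1}`. -/
theorem chipped_hypercube_integer_hull (n : ℕ) (hn : 0 < n) (ρ : ℝ) (hρ0 : 0 < ρ) (hρ1 : ρ < 1) :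
    convexHull ℝ
      {x : Fin n → ℝ | ((∀ i, 0 ≤ x i ∧ x i ≤ 1) ∧ ∑ i, x i ≤ n - ρ) ∧ ∀ i, x i = 0 ∨ x i = 1}
      = {x : Fin n → ℝ | (∀ i, 0 ≤ x i ∧ x i ≤ 1) ∧ ∑ i, x i ≤ n - 1} := by
  apply le_antisymm
  · apply convexHull_min
    · rintro x ⟨⟨hbd, hsum⟩, hint⟩
      obtain ⟨m, hm⟩ := int_sum_aux n x Finset.univ (fun j _ => hint j)
      have hmlt : (m : ℝ) < (n : ℝ) := by rw [← hm]; linarith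
      have : m < (n : ℤ) := by exact_mod_cast hmlt
      have hle : (m : ℝ) ≤ (n : ℝ) - 1 := by
        have : m ≤ (n : ℤ) - 1 := by omega
        exact_mod_cast this
      exact ⟨hbd, by rw [hm]; exact hle⟩
    · intro u hu v hv a b ha hb hab
      refine ⟨fun i => ?_, ?_⟩
      · simp only [Pi.add_apply, Pi.smul_apply, smul_eq_mul]
        constructor
        · have := (hu.1 i).1; have := (hv.1 i).1; positivity
        · nlinarith [(hu.1 i).2, (hv.1 i).2]
      · have : ∑ i, (a • u + b • v) i = a * ∑ i, u i + b * ∑ i, v i := by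
          simp only [Pi.add_apply, Pi.smul_apply, smul_eq_mul]
          rw [Finset.sum_add_distrib, ← Finset.mul_sum, ← Finset.mul_sum]
        rw [this]
        nlinarith [hu.2, hv.2]
  · intro x hx
    exact hull_mem n ρ hρ1 (Finset.univ.card) x
      (Finset.card_le_card (Finset.filter_subset _ _)) hx.1 hx.2
end

section
/- Let n ≥ 2, w[S] = (n-|S|-2ρ)·2^{-|S|-1} for S ⊆ [n], and let x ∈ ℝ^{2^n} be defined by x[S] = (-2)^{|S|}. Then xᵀ M_n(w) x = n/2 - ρ, where M_n(w)[S,T] = w[S∪T]. -/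
open Finset

lemma mqf_sum_card {α : Type*} [DecidableEq α] (C : Finset α) :
    ∑ B ∈ C.powerset, (B.card:ℝ) = C.card * 2^C.card / 2 := by
  have h : ∑ B ∈ C.powerset, (B.card:ℝ) = ∑ B ∈ C.powerset, ((C \ B).card:ℝ) := by
    apply Finset.sum_nbij' (fun B => C \ B) (fun B => C \ B) <;>
      simp (config := {contextual := true}) [Finset.mem_powerset, Finset.sdiff_sdiff_self_left,
        Finset.inter_eq_right]
  have h2 : ∑ B ∈ C.powerset, ((B.card:ℝ) + ((C \ B).card:ℝ)) = 2^C.card * C.card := by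
    have : ∀ B ∈ C.powerset, (B.card:ℝ) + ((C \ B).card:ℝ) = (C.card : ℝ) := by
      intro B hB
      rw [mem_powerset] at hB
      rw [← Nat.cast_add, add_comm, Finset.card_sdiff_add_card_eq_card hB]
    rw [Finset.sum_congr rfl this, Finset.sum_const, Finset.card_powerset]
    simp [mul_comm]
  rw [Finset.sum_add_distrib, ← h] at h2
  linarith

lemma mqf_sup_sum (n : ℕ) (ρ : ℝ) (V : Finset (Fin n)) :
    ∑ A ∈ univ.filter (fun A => V ⊆ A), ((n:ℝ) - A.card - ρ) / 2^n
      = ((n : ℝ) - V.card - 2 * ρ) * 2 ^ (-(V.card : ℤ) - 1) := by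
  classical
  have hre : ∑ A ∈ univ.filter (fun A => V ⊆ A), ((n:ℝ) - A.card - ρ) / 2^n
      = ∑ B ∈ Vᶜ.powerset, ((n:ℝ) - (V.card + B.card) - ρ) / 2^n := by
    apply Finset.sum_nbij' (fun A => A \ V) (fun B => V ∪ B)
    · intro A hA
      rw [mem_powerset]
      intro a ha
      exact mem_compl.2 (mem_sdiff.1 ha).2
    · intro B hB
      simp
    · intro A hA
      simp only [mem_filter, mem_univ, true_and] at hA
      exact Finset.union_sdiff_of_subset hA
    · intro B hB
      rw [mem_powerset] at hB
      exact Finset.union_sdiff_cancel_left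
        (Finset.disjoint_right.2 fun a haB => by simpa using hB haB)
    · intro A hA
      simp only [mem_filter, mem_univ, true_and] at hA
      have hc : (#(A \ V) : ℝ) + #V = #A := by
        rw [← Nat.cast_add, Finset.card_sdiff_add_card_eq_card hA]
      rw [← hc]; ring_nf
  rw [hre]
  have hm : #Vᶜ + #V = n := by simpa using Finset.card_compl_add_card V
  have hsum : ∑ B ∈ Vᶜ.powerset, ((n:ℝ) - (V.card + B.card) - ρ) / 2^n
      = (2^#Vᶜ * ((n:ℝ) - #V - ρ) - (#Vᶜ : ℝ) * 2^#Vᶜ / 2) / 2^n := by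
    rw [← Finset.sum_div]
    congr 1
    have : ∀ B ∈ Vᶜ.powerset, ((n:ℝ) - (V.card + B.card) - ρ)
        = ((n:ℝ) - #V - ρ) - (B.card : ℝ) := by intro B _; ring
    rw [Finset.sum_congr rfl this, Finset.sum_sub_distrib, Finset.sum_const,
      Finset.card_powerset, mqf_sum_card]
    push_cast
    ring
  rw [hsum]
  have h2n : (2:ℝ)^n = 2^#Vᶜ * 2^#V := by rw [← pow_add, hm]
  have hcast : (#Vᶜ : ℝ) = (n : ℝ) - #V := by
    have : (#Vᶜ : ℝ) + #V = n := by exact_mod_cast congrArg (Nat.cast : ℕ → ℝ) hm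
    linarith
  rw [h2n, hcast]
  rw [zpow_sub₀ (by norm_num), zpow_neg, zpow_natCast, zpow_one]
  have h1 : (2:ℝ)^#Vᶜ ≠ 0 := by positivity
  have h2 : (2:ℝ)^#V ≠ 0 := by positivity
  field_simp
  ring

lemma mqf_alt (n : ℕ) (A : Finset (Fin n)) :
    ∑ S ∈ A.powerset, (-2:ℝ)^S.card = (-1)^A.card := by
  have := Finset.sum_pow_mul_eq_add_pow (-2:ℝ) 1 A
  norm_num at this
  rw [this]

/-- The quadratic form of the moment matrix `M_n(w)` at the vector `x[S] = (-2)^{|S|}`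
equals `n/2 - ρ`. -/
theorem moment_quadratic_form (n : ℕ) (hn : 2 ≤ n) (ρ : ℝ)
    (w : Finset (Fin n) → ℝ)
    (hw : ∀ S : Finset (Fin n), w S = ((n : ℝ) - S.card - 2 * ρ) * 2 ^ (-(S.card : ℤ) - 1))
    (x : Finset (Fin n) → ℝ)
    (hx : ∀ S : Finset (Fin n), x S = (-2 : ℝ) ^ S.card) :
    ∑ S : Finset (Fin n), ∑ T : Finset (Fin n), x S * w (S ∪ T) * x T = n / 2 - ρ := by
  classical
  set u : Finset (Fin n) → ℝ := fun A => ((n:ℝ) - A.card - ρ) / 2^n with hu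
  have hw2 : ∀ V : Finset (Fin n),
      w V = ∑ A : Finset (Fin n), (if V ⊆ A then u A else 0) := by
    intro V
    rw [hw V, ← mqf_sup_sum n ρ V, Finset.sum_filter]
  have hpow : ∀ A : Finset (Fin n),
      A.powerset = univ.filter (fun S => S ⊆ A) := by
    intro A; ext S; simp
  calc ∑ S : Finset (Fin n), ∑ T : Finset (Fin n), x S * w (S ∪ T) * x T
      = ∑ S : Finset (Fin n), ∑ T : Finset (Fin n), ∑ A : Finset (Fin n),
          (if S ⊆ A then x S else 0) * u A * (if T ⊆ A then x T else 0) := by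
        refine Finset.sum_congr rfl fun S _ => Finset.sum_congr rfl fun T _ => ?_
        rw [hw2 (S ∪ T), Finset.mul_sum, Finset.sum_mul]
        refine Finset.sum_congr rfl fun A _ => ?_
        by_cases h1 : S ⊆ A <;> by_cases h2 : T ⊆ A <;>
          simp [h1, h2, Finset.union_subset_iff]
    _ = ∑ A : Finset (Fin n),
          u A * (∑ S ∈ A.powerset, x S) * (∑ T ∈ A.powerset, x T) := by
        have step1 : ∀ S : Finset (Fin n),
            ∑ T : Finset (Fin n), ∑ A : Finset (Fin n),
              (if S ⊆ A then x S else 0) * u A * (if T ⊆ A then x T else 0)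
            = ∑ A : Finset (Fin n), ∑ T : Finset (Fin n),
              (if S ⊆ A then x S else 0) * u A * (if T ⊆ A then x T else 0) :=
          fun S => Finset.sum_comm
        rw [Finset.sum_congr rfl fun S _ => step1 S, Finset.sum_comm]
        refine Finset.sum_congr rfl fun A _ => ?_
        have hA : ∀ y : Finset (Fin n) → ℝ,
            ∑ S : Finset (Fin n), (if S ⊆ A then y S else 0) = ∑ S ∈ A.powerset, y S := by
          intro y; rw [hpow A, Finset.sum_filter]
        calc ∑ S : Finset (Fin n), ∑ T : Finset (Fin n),
              (if S ⊆ A then x S else 0) * u A * (if T ⊆ A then x T else 0)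
            = ∑ S : Finset (Fin n), (if S ⊆ A then x S else 0) * u A *
                ∑ T : Finset (Fin n), (if T ⊆ A then x T else 0) := by
              refine Finset.sum_congr rfl fun S _ => ?_
              rw [Finset.mul_sum]
          _ = (∑ S : Finset (Fin n), (if S ⊆ A then x S else 0)) * u A *
                ∑ T : Finset (Fin n), (if T ⊆ A then x T else 0) := by
              rw [← Finset.sum_mul, ← Finset.sum_mul]
          _ = u A * (∑ S ∈ A.powerset, x S) * (∑ T ∈ A.powerset, x T) := by
              simp only [hA x]; ring
    _ = ∑ A : Finset (Fin n), u A := by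
        refine Finset.sum_congr rfl fun A _ => ?_
        have : ∑ S ∈ A.powerset, x S = (-1:ℝ)^A.card := by
          rw [Finset.sum_congr rfl fun S _ => hx S, mqf_alt]
        rw [this, mul_assoc, ← pow_add, ← two_mul, pow_mul]
        norm_num
    _ = n / 2 - ρ := by
        have h0 : (univ : Finset (Finset (Fin n))).filter
            (fun A => (∅ : Finset (Fin n)) ⊆ A) = univ := by
          simp
        have := mqf_sup_sum n ρ (∅ : Finset (Fin n))
        rw [h0] at this
        simp only [Finset.card_empty, Nat.cast_zero] at this
        rw [hu]
        rw [this]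
        norm_num
        ring
end

section
/- Let n ≥ 2, ρ > n/(2^{n+1}-2), and let w[S] = (n-|S|-2ρ)2^{-|S|-1}. Let x' ∈ ℝ^{2^n - 1} be indexed by proper subsets S ⊊ [n] with x'[S] = (-2)^{|S|}, and let M' be the moment matrix M_{n-1}(w) restricted to proper subsets, M'[S,T] = w[S∪T]. Then x'ᵀ M' x' = n/2 - (2^n - 1)ρ < 0; in particular M' is not positive semidefinite. -/
/-! Grouping the pairs `(S, T)` by their union `U`, the weights `(-2)^{|S|+|T|}` add up to
`∏_{u ∈ U} (-2 - 2 + 4)`, which vanishes unless `U = ∅`. So the quadratic form of the full moment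
matrix at `x[S] = (-2)^{|S|}` collapses to `w[∅] = (n - 2ρ)/2`. Deleting the row and column of
`[n]` subtracts `2 · 2ⁿ · w[[n]]` and adds back `4ⁿ · w[[n]]`, and `w[[n]] = -ρ 2⁻ⁿ`. -/

open Finset

theorem Finset.sum_powerset_pow_mul_union_mul_pow {ι R : Type*} [DecidableEq ι]
    [CommRing R] {x y : R} (hxy : x + y + x * y = 0) (g : Finset ι → R) (V : Finset ι) :
    ∑ S ∈ V.powerset, ∑ T ∈ V.powerset, x ^ #S * g (S ∪ T) * y ^ #T = g ∅ := by
  induction V using Finset.induction_on with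
  | empty => simp
  | @insert a V ha ih =>
    calc _ = ∑ S ∈ V.powerset, ∑ T ∈ V.powerset, (x ^ #S * g (S ∪ T) * y ^ #T
              + (x + y + x * y) * (x ^ #S * g (insert a (S ∪ T)) * y ^ #T)) := by
          simp only [sum_powerset_insert ha, ← sum_add_distrib]
          refine sum_congr rfl fun S hS => sum_congr rfl fun T hT => ?_
          have haS : a ∉ S := fun h => ha (mem_powerset.mp hS h)
          have haT : a ∉ T := fun h => ha (mem_powerset.mp hT h)
          rw [card_insert_of_notMem haS, card_insert_of_notMem haT, insert_union,
            union_insert, insert_union, union_insert, insert_idem]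
          ring
      _ = g ∅ := by simp [hxy, ih]

theorem Fintype.sum_subtype_ne_sum_subtype_ne {α M : Type*} [Fintype α] [DecidableEq α]
    [AddCommGroup M] (F : α → α → M) (a : α) :
    ∑ i : {i // i ≠ a}, ∑ j : {j // j ≠ a}, F i j
      = ∑ i, ∑ j, F i j - ∑ i, F i a - ∑ j, F a j + F a a := by
  simp only [Fintype.sum_eq_add_sum_subtype_ne _ a, sum_add_distrib]
  abel

theorem sum_ne_univ_neg_two_pow_mul_union_mul_pow {ι R : Type*} [Fintype ι] [DecidableEq ι]
    [CommRing R] (w : Finset ι → R) :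
    ∑ S : {S : Finset ι // S ≠ univ}, ∑ T : {T : Finset ι // T ≠ univ},
      (-2) ^ #S.1 * w (S.1 ∪ T.1) * (-2) ^ #T.1
      = w ∅ + 2 ^ Fintype.card ι * (2 ^ Fintype.card ι - 2) * w univ := by
  have hfull := sum_powerset_pow_mul_union_mul_pow (x := (-2 : R)) (y := -2)
    (by norm_num) w univ
  have hrow : ∑ S : Finset ι, (-2 : R) ^ #S = (-1) ^ Fintype.card ι := by
    simpa [show (-2 : R) + 1 = -1 by norm_num] using Fintype.sum_pow_mul_eq_add_pow ι (-2 : R) 1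
  rw [powerset_univ] at hfull
  rw [Fintype.sum_subtype_ne_sum_subtype_ne (fun S T => (-2 : R) ^ #S * w (S ∪ T) * (-2) ^ #T)]
  have hU : ∀ S : Finset ι, S ∪ univ = univ ∧ univ ∪ S = univ := fun S =>
    ⟨union_eq_right.2 (subset_univ S), union_eq_left.2 (subset_univ S)⟩
  simp only [hU, card_univ, ← sum_mul, ← mul_sum, hrow, hfull]
  have hpow : (-1 : R) ^ Fintype.card ι * (-2) ^ Fintype.card ι = 2 ^ Fintype.card ι := by
    rw [← mul_pow]; norm_num
  have hsq : (-2 : R) ^ Fintype.card ι * (-2) ^ Fintype.card ι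
      = 2 ^ Fintype.card ι * 2 ^ Fintype.card ι := by
    rw [← mul_pow, ← mul_pow]; norm_num
  linear_combination -2 * w univ * hpow + w univ * hsq

/-- For `ρ > n/(2^{n+1}-2)`, the quadratic form of the restricted moment matrix at
`x'[S] = (-2)^{|S|}` equals `n/2 - (2^n - 1)ρ < 0`; in particular the matrix is not PSD. -/
theorem restricted_moment_not_psd (n : ℕ) (hn : 2 ≤ n) (ρ : ℝ)
    (hρ : ρ > n / (2 ^ (n + 1) - 2))
    (w : Finset (Fin n) → ℝ)
    (hw : ∀ S : Finset (Fin n), w S = ((n : ℝ) - S.card - 2 * ρ) * 2 ^ (-(S.card : ℤ) - 1))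
    (x' : {S : Finset (Fin n) // S ≠ Finset.univ} → ℝ)
    (hx' : ∀ S : {S : Finset (Fin n) // S ≠ Finset.univ}, x' S = (-2 : ℝ) ^ S.1.card)
    (M' : Matrix {S : Finset (Fin n) // S ≠ Finset.univ}
                 {S : Finset (Fin n) // S ≠ Finset.univ} ℝ)
    (hM' : ∀ S T, M' S T = w (S.1 ∪ T.1)) :
    (∑ S, ∑ T, x' S * M' S T * x' T = n / 2 - (2 ^ n - 1) * ρ) ∧
    (n / 2 - (2 ^ n - 1 : ℝ) * ρ < 0) ∧ ¬ M'.PosSemidef := by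
  have hform : ∑ S, ∑ T, x' S * M' S T * x' T = n / 2 - (2 ^ n - 1) * ρ := by
    simp only [hx', hM']
    have hzpow (k : ℕ) : (2 : ℝ) ^ (-(k : ℤ) - 1) = (2 ^ k * 2)⁻¹ := by
      rw [show -(k : ℤ) - 1 = -((k + 1 : ℕ) : ℤ) by push_cast; ring, zpow_neg, zpow_natCast,
        pow_succ]
    rw [sum_ne_univ_neg_two_pow_mul_union_mul_pow, hw, hw, hzpow, hzpow, card_empty, card_univ,
      Fintype.card_fin]
    field_simp
    ring
  have hneg : n / 2 - (2 ^ n - 1 : ℝ) * ρ < 0 := by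
    have h4 : (4 : ℝ) ≤ 2 ^ n := by
      calc (4 : ℝ) = 2 ^ 2 := by norm_num
        _ ≤ 2 ^ n := pow_le_pow_right₀ one_le_two hn
    rw [gt_iff_lt, div_lt_iff₀ (by rw [pow_succ]; linarith), pow_succ] at hρ
    linarith
  refine ⟨hform, hneg, fun hpsd => ?_⟩
  have hnonneg := hpsd.dotProduct_mulVec_nonneg x'
  simp only [star_trivial, dotProduct, Matrix.mulVec, mul_sum, ← mul_assoc] at hnonneg
  linarith
end

section
/- Let n ≥ 2, ρ ∈ (0,n) non-integer, and k a nonnegative integer with k < n(⌈ρ⌉ - ρ)/⌈ρ⌉. Then there exists λ ∈ ℝ with λ > (n - ⌈ρ⌉)/n and (n-k)λ + k < n - ρ; for such λ, the point λ·𝟙 is not in the integer hull of P_{n,ρ}, yet for every pair of disjoint index sets I,J ⊆ [n] with |I|+|J| ≤ k, the vector obtained from λ·𝟙 by setting coordinates in I to 1 and coordinates in J to 0 lies in P_{n,ρ}. -/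
/-!
Take `λ` strictly between `(n - ⌈ρ⌉)/n` and `(n - ρ - k)/(n - k)`; the hypothesis on `k` says
exactly that this interval is nonempty. Then `n λ > n - ⌈ρ⌉` keeps `λ·𝟙` out of the integer hull,
while a switching of at most `k` coordinates raises the coordinate sum by at most `k (1 - λ)`,
so its sum stays below `(n - k) λ + k < n - ρ`.
-/

open Finset

section Switching

variable {ι R : Type*} [DecidableEq ι]

theorem ite_mem_ite_mem_mem_Icc {I J : Finset ι} {lam : ℝ} (h0 : 0 ≤ lam) (h1 : lam ≤ 1) (i : ι) :
    0 ≤ (if i ∈ I then (1 : ℝ) else if i ∈ J then 0 else lam) ∧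
      (if i ∈ I then (1 : ℝ) else if i ∈ J then 0 else lam) ≤ 1 := by
  split_ifs <;> simp [h0, h1]

variable [Fintype ι]

theorem sum_ite_mem_ite_mem [CommRing R] {I J : Finset ι} (hIJ : Disjoint I J) (a b c : R) :
    ∑ i, (if i ∈ I then a else if i ∈ J then b else c) =
      Fintype.card ι * c + #I * (a - c) + #J * (b - c) := by
  have hsplit : ∀ i, (if i ∈ I then a else if i ∈ J then b else c) =
      c + (if i ∈ I then a - c else 0) + (if i ∈ J then b - c else 0) := by
    intro i
    by_cases hI : i ∈ I
    · simp [hI, Finset.disjoint_left.mp hIJ hI]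
    · by_cases hJ : i ∈ J <;> simp [hI, hJ]
  simp only [hsplit, sum_add_distrib, sum_ite_mem, univ_inter, sum_const, card_univ,
    nsmul_eq_mul]

theorem sum_ite_mem_ite_mem_le {I J : Finset ι} (hIJ : Disjoint I J) {k : ℕ}
    (hcard : #I + #J ≤ k) {lam : ℝ} (h0 : 0 ≤ lam) (h1 : lam ≤ 1) :
    ∑ i, (if i ∈ I then (1 : ℝ) else if i ∈ J then 0 else lam) ≤
      (Fintype.card ι - k) * lam + k := by
  rw [sum_ite_mem_ite_mem hIJ]
  have hI : (#I : ℝ) ≤ k := by exact_mod_cast (Nat.le_add_right _ _).trans hcard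
  have hI' : (#I : ℝ) * (1 - lam) ≤ k * (1 - lam) := by gcongr
  have hJ : 0 ≤ (#J : ℝ) * lam := by positivity
  linarith

end Switching

theorem exists_mem_Icc_of_lt_mul_sub_div {n C ρ k : ℝ} (hρ : 0 < ρ) (hC : 0 < C) (hCn : C ≤ n)
    (hk : k < n * (C - ρ) / C) :
    ∃ lam, (n - C) / n < lam ∧ (n - k) * lam + k < n - ρ ∧ 0 ≤ lam ∧ lam ≤ 1 := by
  have hn : 0 < n := hC.trans_le hCn
  have hkC : k * C < n * (C - ρ) := (lt_div_iff₀ hC).mp hk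
  have hkn : k < n - ρ := by nlinarith
  have hnk : 0 < n - k := by linarith
  have hlt : (n - C) / n < (n - ρ - k) / (n - k) := by
    rw [div_lt_div_iff₀ hn hnk]; nlinarith
  obtain ⟨lam, hlo, hhi⟩ := exists_between hlt
  refine ⟨lam, hlo, ?_, ?_, ?_⟩
  · have := (lt_div_iff₀' hnk).mp hhi
    linarith
  · exact (div_nonneg (by linarith) hn.le).trans hlo.le
  · exact hhi.le.trans ((div_le_one hnk).mpr (by linarith))

theorem chipped_hypercube_rank_lb_general (n : ℕ) (ρ : ℝ)
    (hρ0 : 0 < ρ) (hρn : ρ < n)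
    (k : ℕ) (hk : (k : ℝ) < n * ((⌈ρ⌉ : ℝ) - ρ) / (⌈ρ⌉ : ℝ)) :
    ∃ lam : ℝ,
      lam > ((n : ℝ) - (⌈ρ⌉ : ℝ)) / n ∧
      ((n : ℝ) - k) * lam + k < n - ρ ∧
      (fun _ : Fin n => lam) ∉
        {x : Fin n → ℝ | (∀ i, 0 ≤ x i ∧ x i ≤ 1) ∧ ∑ i, x i ≤ (n : ℝ) - (⌈ρ⌉ : ℝ)} ∧
      ∀ I J : Finset (Fin n), Disjoint I J → I.card + J.card ≤ k →
        (fun i : Fin n => if i ∈ I then (1 : ℝ) else if i ∈ J then 0 else lam) ∈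
          {x : Fin n → ℝ | (∀ i, 0 ≤ x i ∧ x i ≤ 1) ∧ ∑ i, x i ≤ (n : ℝ) - ρ} := by
  have hC : (0 : ℝ) < ⌈ρ⌉ := by exact_mod_cast Int.ceil_pos.mpr hρ0
  have hCn : (⌈ρ⌉ : ℝ) ≤ n := by
    exact_mod_cast Int.ceil_le.mpr (show ρ ≤ ((n : ℤ) : ℝ) by exact_mod_cast hρn.le)
  obtain ⟨lam, hlo, hbound, h0, h1⟩ := exists_mem_Icc_of_lt_mul_sub_div hρ0 hC hCn hk
  refine ⟨lam, hlo, hbound, ?_, fun I J hIJ hcard => ⟨ite_mem_ite_mem_mem_Icc h0 h1, ?_⟩⟩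
  · rintro ⟨-, hsum⟩
    rw [sum_const, card_univ, Fintype.card_fin, nsmul_eq_mul] at hsum
    rw [div_lt_iff₀' (hC.trans_le hCn)] at hlo
    linarith
  · have := sum_ite_mem_ite_mem_le hIJ hcard h0 h1
    rw [Fintype.card_fin] at this
    exact this.trans hbound.le

/-- For non-integer `ρ ∈ (0,n)` and `k < n(⌈ρ⌉-ρ)/⌈ρ⌉`, there is `λ` with
`λ > (n-⌈ρ⌉)/n` and `(n-k)λ + k < n-ρ`; then `λ·𝟙` is outside the integer hull of `P_{n,ρ}`
but all of its `k`-switchings lie in `P_{n,ρ}`. -/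
theorem chipped_hypercube_rank_lb (n : ℕ) (hn : 2 ≤ n) (ρ : ℝ)
    (hρ0 : 0 < ρ) (hρn : ρ < n) (hρint : ¬ ∃ m : ℤ, (m : ℝ) = ρ)
    (k : ℕ) (hk : (k : ℝ) < n * ((⌈ρ⌉ : ℝ) - ρ) / (⌈ρ⌉ : ℝ)) :
    ∃ lam : ℝ,
      lam > ((n : ℝ) - (⌈ρ⌉ : ℝ)) / n ∧
      ((n : ℝ) - k) * lam + k < n - ρ ∧
      (fun _ : Fin n => lam) ∉
        {x : Fin n → ℝ | (∀ i, 0 ≤ x i ∧ x i ≤ 1) ∧ ∑ i, x i ≤ (n : ℝ) - (⌈ρ⌉ : ℝ)} ∧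
      ∀ I J : Finset (Fin n), Disjoint I J → I.card + J.card ≤ k →
        (fun i : Fin n => if i ∈ I then (1 : ℝ) else if i ∈ J then 0 else lam) ∈
          {x : Fin n → ℝ | (∀ i, 0 ≤ x i ∧ x i ≤ 1) ∧ ∑ i, x i ≤ (n : ℝ) - ρ} :=
  chipped_hypercube_rank_lb_general n ρ hρ0 hρn k hk
end

section
/- For every integer n ≥ 2 and every non-integer ρ ∈ (0, n-1), setting ℓ = n - ⌈ρ⌉ and ε = min(⌈ρ⌉ - ρ, ℓ/(n-1)), the point x̄ = ((ℓ(1-ε)+ε)/(n(1-ε)+ε))·𝟙 ∈ ℝ^n satisfies Σᵢ x̄ᵢ > ℓ, i.e., x̄ is outside the integer hull of P_{n,ρ}. -/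
/-- For non-integer `ρ ∈ (0,n-1)`, with `ℓ = n - ⌈ρ⌉` and `ε = min(⌈ρ⌉-ρ, ℓ/(n-1))`,
the point `x̄ = ((ℓ(1-ε)+ε)/(n(1-ε)+ε))·𝟙` has coordinate sum greater than `ℓ`. -/
theorem chipped_hypercube_tilde_ls (n : ℕ) (hn : 2 ≤ n) (ρ : ℝ)
    (hρ0 : 0 < ρ) (hρn : ρ < n - 1) (hρint : ¬ ∃ m : ℤ, (m : ℝ) = ρ) :
    let l : ℝ := (n : ℝ) - (⌈ρ⌉ : ℝ)
    let ε : ℝ := min ((⌈ρ⌉ : ℝ) - ρ) (l / (n - 1))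
    let xbar : Fin n → ℝ := fun _ => (l * (1 - ε) + ε) / (n * (1 - ε) + ε)
    ∑ i, xbar i > l := by
  intro l ε xbar
  have hn2 : (2 : ℝ) ≤ (n : ℝ) := by exact_mod_cast hn
  have hceil1 : (1 : ℝ) ≤ (⌈ρ⌉ : ℝ) := by
    exact_mod_cast Int.one_le_ceil_iff.mpr hρ0
  have hceiln : (⌈ρ⌉ : ℝ) ≤ (n : ℝ) - 1 := by
    have : (⌈ρ⌉ : ℤ) ≤ (n : ℤ) - 1 := by
      rw [Int.ceil_le]; push_cast; linarith
    exact_mod_cast this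
  have hl1 : (1 : ℝ) ≤ l := by simp only [l]; linarith
  have hne : ρ ≠ (⌈ρ⌉ : ℝ) := fun h => hρint ⟨⌈ρ⌉, h.symm⟩
  have hε0 : 0 < ε := by
    apply lt_min
    · have := Int.le_ceil ρ
      exact sub_pos.mpr (lt_of_le_of_ne this hne)
    · apply div_pos (by linarith) (by linarith)
  have hε1 : ε < 1 := by
    have h1 : (⌈ρ⌉ : ℝ) - ρ < 1 := by
      have := Int.ceil_lt_add_one ρ
      linarith
    exact lt_of_le_of_lt (min_le_left _ _) h1
  have hD : 0 < (n : ℝ) * (1 - ε) + ε := by nlinarith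
  have hsum : ∑ i, xbar i = (n : ℝ) * ((l * (1 - ε) + ε) / ((n : ℝ) * (1 - ε) + ε)) := by
    simp [xbar, Finset.sum_const, mul_comm]
  rw [gt_iff_lt, hsum, ← mul_div_assoc, lt_div_iff₀ hD]
  have hln : l < (n : ℝ) := by simp only [l]; linarith
  nlinarith
end
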